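/- Let Q ⊂ ℝ^N be a cube and f ∈ L¹(Q; ℝ^d). Then there exist real measurable functions φ₁, …, φ_d supported on Q with ‖φ_i‖_∞ ≤ 1 such that for every measurable g : Q → ℝ^d with g(x) ∈ ⟨⟨f⟩⟩_Q a.e. on Q there exist real measurable functions ψ₁, …, ψ_d with ‖ψ_i‖_∞ ≤ C(d) (a constant depending only on d) such that g(x) = Σ_{i=1}^d ψ_i(x)·⟨φ_i f⟩_Q for a.e. x ∈ Q. -/

import Mathlib

open MeasureTheory Set Matrix
open scoped ENNReal BigOperators NNReal

noncomputable section

namespace CBD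

/-- The Euclidean norm of a vector in `ℝ^n` given as a plain function. -/
def vnorm {n : ℕ} (v : Fin n → ℝ) : ℝ := Real.sqrt (∑ i, v i ^ 2)

/-- An axis-parallel half-open cube in `ℝ^N`. -/
structure Cube (N : ℕ) where
  corner : Fin N → ℝ
  side : ℝ
  side_pos : 0 < side

namespace Cube

variable {N : ℕ}

/-- The subset of `ℝ^N` determined by the cube. -/
def set (Q : Cube N) : Set (Fin N → ℝ) :=
  {x | ∀ i, Q.corner i ≤ x i ∧ x i < Q.corner i + Q.side}

/-- The volume `|Q|` of the cube. -/
def vol (Q : Cube N) : ℝ := Q.side ^ N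

/-- The concentric dilation `rQ` (intended for `r ≥ 1`; implemented with `max r 1`). -/
def dilate (Q : Cube N) (r : ℝ) : Cube N where
  corner := fun i => Q.corner i + Q.side / 2 - max r 1 * Q.side / 2
  side := max r 1 * Q.side
  side_pos := mul_pos (lt_of_lt_of_le one_pos (le_max_right r 1)) Q.side_pos

/-- `Q` belongs to the standard dyadic lattice `D`:
`Q = 2^{-k}([0,1)^N + m)` for some `k ∈ ℤ`, `m ∈ ℤ^N`. -/
def IsDyadic (Q : Cube N) : Prop :=
  ∃ (k : ℤ) (m : Fin N → ℤ), Q.side = (2:ℝ) ^ (-k) ∧ ∀ i, Q.corner i = (2:ℝ) ^ (-k) * (m i : ℝ)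

/-- The subcube of `Q` of dyadic generation `k` in position `m`. -/
def subCube (Q : Cube N) (k : ℕ) (m : Fin N → ℕ) : Cube N where
  corner := fun i => Q.corner i + Q.side * (m i : ℝ) / 2 ^ k
  side := Q.side / 2 ^ k
  side_pos := div_pos Q.side_pos (by positivity)

/-- `R` is a dyadic subcube of `Q` (relative dyadic lattice `D(Q)`, including `Q` itself). -/
def IsDyadicSub (Q R : Cube N) : Prop :=
  ∃ (k : ℕ) (m : Fin N → ℕ), (∀ i, m i < 2 ^ k) ∧ R = Q.subCube k m

end Cube

variable {N d : ℕ}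

/-- The dyadic lattice, as a set of cubes. -/
def dyadicCubes (N : ℕ) : Set (Cube N) := {Q | Q.IsDyadic}

/-- All cubes in `ℝ^N`. -/
def allCubes (N : ℕ) : Set (Cube N) := Set.univ

/-- The average `⟨g⟩_Q = |Q|⁻¹ ∫_Q g`. -/
def avg (Q : Cube N) (g : (Fin N → ℝ) → ℝ) : ℝ :=
  (Q.vol)⁻¹ * ∫ y in Q.set, g y

/-- The entrywise average `⟨W⟩_Q` of a matrix-valued function. -/
def matAvg (Q : Cube N) (W : (Fin N → ℝ) → Matrix (Fin d) (Fin d) ℝ) :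
    Matrix (Fin d) (Fin d) ℝ :=
  Matrix.of fun i j => avg Q fun x => W x i j

/-- The positive semidefinite square root of a matrix (junk value `0` off psd matrices). -/
def msqrt (A : Matrix (Fin d) (Fin d) ℝ) : Matrix (Fin d) (Fin d) ℝ :=
  letI := Classical.dec A.PosSemidef
  if h : A.PosSemidef then
    (h.1.eigenvectorUnitary : Matrix (Fin d) (Fin d) ℝ) * diagonal (Real.sqrt ∘ h.1.eigenvalues) *
      star (h.1.eigenvectorUnitary : Matrix (Fin d) (Fin d) ℝ)
  else 0

/-- The `ℓ² → ℓ²` operator norm of a `d × d` matrix. -/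
def matOpNorm (A : Matrix (Fin d) (Fin d) ℝ) : ℝ :=
  sSup {t | ∃ v : Fin d → ℝ, vnorm v ≤ 1 ∧ t = vnorm (A.mulVec v)}

/-- A `d`-dimensional matrix weight: locally integrable, positive semidefinite values. -/
def IsMatrixWeight (W : (Fin N → ℝ) → Matrix (Fin d) (Fin d) ℝ) : Prop :=
  (∀ x, (W x).PosSemidef) ∧ ∀ i j, LocallyIntegrable (fun x => W x i j) volume

/-- A scalar weight: nonnegative and locally integrable. -/
def IsScalarWeight (w : (Fin N → ℝ) → ℝ) : Prop :=
  (∀ x, 0 ≤ w x) ∧ LocallyIntegrable w volume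

/-- The maximal function adapted to the cube `Q`:
`M_Q w(x) = sup {⟨w⟩_R : R ∈ D(Q), x ∈ R}` (and `0` off `Q`). -/
def MQ (Q : Cube N) (w : (Fin N → ℝ) → ℝ) (x : Fin N → ℝ) : ℝ :=
  sSup ({0} ∪ {t | ∃ R : Cube N, Q.IsDyadicSub R ∧ x ∈ R.set ∧ t = avg R w})

/-- Admissible `A∞` constants of a scalar weight, over a collection `𝒬` of cubes. -/
def AinftyOn (𝒬 : Set (Cube N)) (w : (Fin N → ℝ) → ℝ) : Set ℝ :=
  {C | 0 ≤ C ∧ ∀ Q ∈ 𝒬, avg Q (MQ Q w) ≤ C * avg Q w}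

/-- The `A∞` characteristic (best admissible constant) of a scalar weight. -/
def AinftyChar (𝒬 : Set (Cube N)) (w : (Fin N → ℝ) → ℝ) : ℝ := sInf (AinftyOn 𝒬 w)

/-- The scalar weight `w_e(x) = (W(x)e, e)` associated to a matrix weight and `e ∈ ℝ^d`. -/
def we (W : (Fin N → ℝ) → Matrix (Fin d) (Fin d) ℝ) (e : Fin d → ℝ) :
    (Fin N → ℝ) → ℝ := fun x => e ⬝ᵥ (W x).mulVec e

/-- Admissible constants for the scalar `A∞` characteristic of a matrix weight. -/
def matAinftyScOn (𝒬 : Set (Cube N)) (W : (Fin N → ℝ) → Matrix (Fin d) (Fin d) ℝ) : Set ℝ :=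
  {C | 0 ≤ C ∧ ∀ e : Fin d → ℝ, ∀ Q ∈ 𝒬, avg Q (MQ Q (we W e)) ≤ C * avg Q (we W e)}

/-- The scalar `A∞` characteristic `[W]^{sc}_{A∞} = sup_e [w_e]_{A∞}` of a matrix weight. -/
def matAinftyScChar (𝒬 : Set (Cube N)) (W : (Fin N → ℝ) → Matrix (Fin d) (Fin d) ℝ) : ℝ :=
  sInf (matAinftyScOn 𝒬 W)

/-- Admissible constants for the two-weight matrix `A₂` characteristic
`[W,V]_{A₂} = sup_Q ‖⟨W⟩_Q^{1/2} ⟨V⟩_Q^{1/2}‖²`. -/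
def A2pairOn (𝒬 : Set (Cube N)) (W V : (Fin N → ℝ) → Matrix (Fin d) (Fin d) ℝ) : Set ℝ :=
  {C | ∀ Q ∈ 𝒬, matOpNorm (msqrt (matAvg Q W) * msqrt (matAvg Q V)) ^ 2 ≤ C}

/-- The two-weight matrix `A₂` characteristic. -/
def A2pairChar (𝒬 : Set (Cube N)) (W V : (Fin N → ℝ) → Matrix (Fin d) (Fin d) ℝ) : ℝ :=
  sInf (A2pairOn 𝒬 W V)

/-- Admissible constants for the scalar `A₂` characteristic `sup_Q ⟨w⟩_Q ⟨w⁻¹⟩_Q`. -/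
def scalarA2On (𝒬 : Set (Cube N)) (w : (Fin N → ℝ) → ℝ) : Set ℝ :=
  {C | ∀ Q ∈ 𝒬, avg Q w * avg Q (fun x => (w x)⁻¹) ≤ C}

/-- The scalar `A₂` characteristic. -/
def scalarA2Char (𝒬 : Set (Cube N)) (w : (Fin N → ℝ) → ℝ) : ℝ := sInf (scalarA2On 𝒬 w)

/-- An `ω`-Calderón–Zygmund operator on `ℝ^N`: a linear operator, bounded on `L²`,
with a kernel representation off the support, whose kernel satisfies the standard size
condition and the `ω`-smoothness condition, `ω` being a modulus of continuity. -/
structure CZO (N : ℕ) where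
  op : ((Fin N → ℝ) → ℝ) →ₗ[ℝ] ((Fin N → ℝ) → ℝ)
  K : (Fin N → ℝ) → (Fin N → ℝ) → ℝ
  ω : ℝ → ℝ
  CK : ℝ
  normBound : ℝ
  bounded : ∀ f : (Fin N → ℝ) → ℝ, MemLp f 2 volume →
    MemLp (op f) 2 volume ∧
      eLpNorm (op f) 2 volume ≤ ENNReal.ofReal normBound * eLpNorm f 2 volume
  repr : ∀ f : (Fin N → ℝ) → ℝ, MemLp f 2 volume → ∀ x ∉ tsupport f,
    op f x = ∫ y, K x y * f y
  size : ∀ x y : Fin N → ℝ, x ≠ y → |K x y| ≤ CK / vnorm (x - y) ^ N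
  smooth : ∀ x x' y : Fin N → ℝ, x ≠ y → vnorm (x - x') ≤ vnorm (x - y) / 2 →
    |K x y - K x' y| + |K y x - K y x'| ≤
      ω (vnorm (x - x') / vnorm (x - y)) / vnorm (x - y) ^ N
  omega_zero : ω 0 = 0
  omega_mono : MonotoneOn ω (Set.Ici 0)
  omega_subadd : ∀ s t : ℝ, 0 ≤ s → 0 ≤ t → ω (s + t) ≤ ω s + ω t

/-- The Dini condition `∫₀¹ ω(t) dt/t < ∞` for a modulus of continuity. -/
def Dini (ω : ℝ → ℝ) : Prop :=
  IntegrableOn (fun t => ω t / t) (Set.Ioc (0:ℝ) 1) volume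

/-- Componentwise (i.e. `T ⊗ I_d`) action of a scalar operator on vector-valued functions. -/
def vecApply (T : ((Fin N → ℝ) → ℝ) → ((Fin N → ℝ) → ℝ))
    (f : (Fin N → ℝ) → Fin d → ℝ) : (Fin N → ℝ) → Fin d → ℝ :=
  fun x i => T (fun y => f y i) x

/-- `T` maps `L²` to `L²` with operator norm at most `M`. -/
def L2OpNormLe (T : ((Fin N → ℝ) → ℝ) → ((Fin N → ℝ) → ℝ)) (M : ℝ) : Prop :=
  ∀ f : (Fin N → ℝ) → ℝ, MemLp f 2 volume →
    MemLp (T f) 2 volume ∧ eLpNorm (T f) 2 volume ≤ ENNReal.ofReal M * eLpNorm f 2 volume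

/-- `T` is bounded on `L²`. -/
def L2Bounded (T : ((Fin N → ℝ) → ℝ) → ((Fin N → ℝ) → ℝ)) : Prop :=
  ∃ M : ℝ, L2OpNormLe T M

/-- The family of kernels of a (generalized big) Haar shift of complexity `r`:
`K_Q` is supported on `Q × Q`, bounded by `|Q|⁻¹`, constant on products of
`(r+1)`-st generation dyadic subcubes of `Q`, and vanishes for non-dyadic `Q`. -/
structure HaarShiftKernel (N : ℕ) (r : ℕ) where
  K : Cube N → (Fin N → ℝ) → (Fin N → ℝ) → ℝ
  measK : ∀ Q : Cube N, Measurable (Function.uncurry (K Q))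
  suppK : ∀ Q : Cube N, ∀ x y, K Q x y ≠ 0 → x ∈ Q.set ∧ y ∈ Q.set
  bddK : ∀ Q : Cube N, ∀ x y, |K Q x y| ≤ (Cube.vol Q)⁻¹
  constK : ∀ Q : Cube N, ∀ m m' : Fin N → ℕ,
    (∀ i, m i < 2 ^ (r + 1)) → (∀ i, m' i < 2 ^ (r + 1)) →
    ∀ x x' y y', x ∈ (Q.subCube (r + 1) m).set → x' ∈ (Q.subCube (r + 1) m).set →
      y ∈ (Q.subCube (r + 1) m').set → y' ∈ (Q.subCube (r + 1) m').set →
      K Q x y = K Q x' y'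
  dyadicK : ∀ Q : Cube N, ¬Q.IsDyadic → K Q = 0

/-- The operator `𝕊 = Σ_{Q ∈ D} T_Q` associated to a family of Haar shift kernels. -/
def hsApply {r : ℕ} (S : HaarShiftKernel N r) (f : (Fin N → ℝ) → ℝ) : (Fin N → ℝ) → ℝ :=
  fun x => ∑' Q : Cube N, ∫ y, S.K Q x y * f y

/-- The cancellation conditions `T_Q 1_Q = 0`, `T_Q^* 1_Q = 0` making a generalized
big Haar shift a big Haar shift. -/
def IsBigShift {r : ℕ} (S : HaarShiftKernel N r) : Prop :=
  (∀ Q : Cube N, ∀ x, (∫ y, S.K Q x y) = 0) ∧ (∀ Q : Cube N, ∀ y, (∫ x, S.K Q x y) = 0)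

/-- The sublattice `D̃ = ∪_j D_{k+(r+1)j}` of the dyadic lattice. -/
def Dtilde (N r k : ℕ) : Set (Cube N) :=
  {Q | Q.IsDyadic ∧ ∃ j : ℤ, Q.side = (2:ℝ) ^ (-((k : ℤ) + (r + 1) * j))}

/-- The Haar shift is `r`-separated with lattice parameter `k`:
`T_Q ≠ 0` only for `Q ∈ D̃`. -/
def SeparatedKernel {r : ℕ} (S : HaarShiftKernel N r) (k : ℕ) : Prop :=
  ∀ Q : Cube N, S.K Q ≠ 0 → Q ∈ Dtilde N r k

/-- The martingale difference `Δ_R b = Σ_{R' child of R} ⟨b⟩_{R'} 1_{R'} - ⟨b⟩_R 1_R`. -/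
def haarDelta (R : Cube N) (b : (Fin N → ℝ) → ℝ) (x : Fin N → ℝ) : ℝ :=
  (∑ m : Fin N → Fin 2, Set.indicator (R.subCube 1 fun i => (m i : ℕ)).set
      (fun _ => avg (R.subCube 1 fun i => (m i : ℕ)) b) x)
    - Set.indicator R.set (fun _ => avg R b) x

/-- The paraproduct of order `r` with symbol `b`:
`Π_b^r f = Σ_{Q ∈ D} ⟨f⟩_Q Σ_{R ∈ ch^r Q} Δ_R b`. -/
def paraApply (r : ℕ) (b f : (Fin N → ℝ) → ℝ) : (Fin N → ℝ) → ℝ :=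
  fun x => ∑' Q : dyadicCubes N,
    avg Q.val f * ∑ m : Fin N → Fin (2 ^ r), haarDelta (Q.val.subCube r fun i => (m i : ℕ)) b x

/-- The paraproduct `Π_b^r` is `r`-separated with lattice parameter `k`. -/
def SeparatedPara (r : ℕ) (b : (Fin N → ℝ) → ℝ) (k : ℕ) : Prop :=
  ∀ Q : Cube N, Q.IsDyadic →
    (∃ x, (∑ m : Fin N → Fin (2 ^ r), haarDelta (Q.subCube r fun i => (m i : ℕ)) b x) ≠ 0) →
    Q ∈ Dtilde N r k

/-- `T` is a big Haar shift of complexity `r`, or a paraproduct of order `r`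
with `L²` norm at most `2^{-Nr/2}`. -/
def IsShiftOrParaproduct (N r : ℕ) (T : ((Fin N → ℝ) → ℝ) → ((Fin N → ℝ) → ℝ)) : Prop :=
  (∃ S : HaarShiftKernel N r, IsBigShift S ∧ L2Bounded (hsApply S) ∧ T = hsApply S) ∨
  (∃ b : (Fin N → ℝ) → ℝ, LocallyIntegrable b volume ∧
      L2OpNormLe (paraApply r b) (Real.sqrt ((2:ℝ) ^ (N * r)))⁻¹ ∧ T = paraApply r b)

/-- `T` is an `r`-separated big Haar shift of complexity `r`, or an `r`-separated
paraproduct of order `r` with `L²` norm at most `2^{-Nr/2}`; `k ≤ r` is the lattice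
parameter of the separation sublattice `D̃`. -/
def IsSeparatedShiftOrParaproduct (N r k : ℕ)
    (T : ((Fin N → ℝ) → ℝ) → ((Fin N → ℝ) → ℝ)) : Prop :=
  k ≤ r ∧
  ((∃ S : HaarShiftKernel N r, IsBigShift S ∧ L2Bounded (hsApply S) ∧
      SeparatedKernel S k ∧ T = hsApply S) ∨
   (∃ b : (Fin N → ℝ) → ℝ, LocallyIntegrable b volume ∧
      L2OpNormLe (paraApply r b) (Real.sqrt ((2:ℝ) ^ (N * r)))⁻¹ ∧
      SeparatedPara r b k ∧ T = paraApply r b))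

/-- The convex-body average `⟨⟨f⟩⟩_Q = {⟨φ f⟩_Q : ‖φ‖_∞ ≤ 1}`. -/
def cbAvg (Q : Cube N) (f : (Fin N → ℝ) → Fin d → ℝ) : Set (Fin d → ℝ) :=
  {v | ∃ φ : (Fin N → ℝ) → ℝ, Measurable φ ∧ (∀ x, |φ x| ≤ 1) ∧
        v = fun i => avg Q fun x => φ x * f x i}

/-- A weakly `η`-sparse family of cubes: there are pairwise disjoint measurable
subsets `E_Q ⊆ Q` with `|E_Q| ≥ η |Q|`. -/
def WeaklySparse (S : Set (Cube N)) (η : ℝ) : Prop :=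
  ∃ E : Cube N → Set (Fin N → ℝ),
    (∀ Q ∈ S, E Q ⊆ Q.set ∧ MeasurableSet (E Q) ∧ ENNReal.ofReal (η * Q.vol) ≤ volume (E Q)) ∧
    S.PairwiseDisjoint E

/-- The value at `x` of the convex-body sparse operator
`𝐋_S f = Σ_{Q ∈ S} ⟨⟨f⟩⟩_Q 1_Q` (an infinite Minkowski sum): all convergent sums
`Σ_Q g(Q)` with `g(Q) ∈ ⟨⟨f⟩⟩_Q` whenever `Q ∈ S` contains `x`, and `g(Q) = 0` otherwise. -/
def sparseBody (S : Set (Cube N)) (f : (Fin N → ℝ) → Fin d → ℝ) (x : Fin N → ℝ) :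
    Set (Fin d → ℝ) :=
  {v | ∃ g : Cube N → Fin d → ℝ,
        (∀ Q : Cube N, Q ∈ S ∧ x ∈ Q.set → g Q ∈ cbAvg Q f) ∧
        (∀ Q : Cube N, ¬(Q ∈ S ∧ x ∈ Q.set) → g Q = 0) ∧ HasSum g v}

/-- The `S`-children of `Q`: maximal cubes of `S` strictly contained in `Q`. -/
def sChildren (S : Set (Cube N)) (Q : Cube N) : Set (Cube N) :=
  {R | R ∈ S ∧ R.set ⊂ Q.set ∧ ¬∃ R' ∈ S, R.set ⊂ R'.set ∧ R'.set ⊂ Q.set}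

/-- A classical `ε`-sparse family of dyadic cubes: `Σ_{R ∈ ch_S(Q)} |R| ≤ ε |Q|`. -/
def EpsSparse (S : Set (Cube N)) (ε : ℝ) : Prop :=
  (∀ Q ∈ S, Q.IsDyadic) ∧
  ∀ Q ∈ S, ∀ F : Finset (Cube N), ↑F ⊆ sChildren S Q → ∑ R ∈ F, R.vol ≤ ε * Q.vol

/-- A dyadic `λ`-Carleson family: `Σ_{R ∈ S, R ⊆ Q} |R| ≤ λ |Q|` for all `Q ∈ S`. -/
def DyadicCarleson (S : Set (Cube N)) (lam : ℝ) : Prop :=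
  (∀ Q ∈ S, Q.IsDyadic) ∧
  ∀ Q ∈ S, ∀ F : Finset (Cube N), (↑F ⊆ {R | R ∈ S ∧ R.set ⊆ Q.set}) →
    ∑ R ∈ F, R.vol ≤ lam * Q.vol

/-- A simple sparse family: every cube of `S` has at most one `S`-child. -/
def SimpleSparse (S : Set (Cube N)) : Prop :=
  (∀ Q ∈ S, Q.IsDyadic) ∧ ∀ Q ∈ S, (sChildren S Q).Subsingleton

end CBD

end

/-!
Let `V = span ⟨⟨f⟩⟩_Q` and fix a basis `e` of `V`. Since `⟨⟨f⟩⟩_Q` is bounded, `|det_e|` is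
bounded on tuples of its elements, and since it spans `V`, the supremum `s` is positive. Pick
`v₁, …, v_r ∈ ⟨⟨f⟩⟩_Q` with `|det_e v| > s / 2`. By Cramer's rule the `i`-th coordinate of any
`w ∈ ⟨⟨f⟩⟩_Q` in the basis `v` is `det_e (v with vᵢ replaced by w) / det_e v`, of modulus at
most `s / (s / 2) = 2`. Writing `vᵢ = ⟨φᵢ f⟩_Q` and clamping the coordinates of `g(x)` to
`[-2, 2]` gives the representation with `C(d) = 2`.
-/

open Module Bornology

section CoordSystem

variable {E : Type*} [AddCommGroup E] [Module ℝ E] {ι : Type*} [Fintype ι]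

structure IsBoundedCoordSystem (K : Set E) (C : ℝ) (v : ι → E) (c : ι → E →ₗ[ℝ] ℝ) : Prop where
  mem : ∀ i, v i ∈ K
  abs_coord_le : ∀ w ∈ K, ∀ i, |c i w| ≤ C
  eq_sum : ∀ w ∈ K, w = ∑ i, c i w • v i

theorem IsBoundedCoordSystem.extend {ι' : Type*} [Fintype ι'] {K : Set E} {C : ℝ}
    {v : ι' → E} {c : ι' → E →ₗ[ℝ] ℝ} (h : IsBoundedCoordSystem K C v c) (hC : 0 ≤ C)
    (emb : ι' ↪ ι) {x₀ : E} (hx₀ : x₀ ∈ K) :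
    IsBoundedCoordSystem K C (Function.extend emb v fun _ => x₀) (Function.extend emb c 0) := by
  refine ⟨fun k => ?_, fun w hw k => ?_, fun w hw => ?_⟩
  · by_cases hk : ∃ i, emb i = k
    · obtain ⟨i, rfl⟩ := hk; rw [emb.injective.extend_apply]; exact h.mem i
    · rw [Function.extend_apply' _ _ _ hk]; exact hx₀
  · by_cases hk : ∃ i, emb i = k
    · obtain ⟨i, rfl⟩ := hk; rw [emb.injective.extend_apply]; exact h.abs_coord_le w hw i
    · rw [Function.extend_apply' _ _ _ hk]; simpa using hC
  · refine (h.eq_sum w hw).trans (Fintype.sum_of_injective emb emb.injective _ _ ?_ ?_)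
    · intro k hk
      rw [Function.extend_apply' _ _ _ hk, Pi.zero_apply, LinearMap.zero_apply, zero_smul]
    · intro i; rw [emb.injective.extend_apply, emb.injective.extend_apply]

end CoordSystem

section BoundedCoordinates

variable {E : Type*} [NormedAddCommGroup E] [NormedSpace ℝ E] [FiniteDimensional ℝ E]
  {ι : Type*} [Fintype ι]

theorem Module.Basis.continuous_det [DecidableEq ι] (e : Basis ι ℝ E) : Continuous e.det := by
  have hrepr : ∀ i, Continuous fun v : E => e.repr v i := fun i =>
    (e.coord i).continuous_of_finiteDimensional
  simp_rw [funext e.det_apply]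
  exact Continuous.matrix_det (continuous_pi fun i => continuous_pi fun j =>
    (hrepr i).comp (continuous_apply j))

theorem Module.Basis.bddAbove_abs_det_image_pi [DecidableEq ι] (e : Basis ι ℝ E) {K : Set E}
    (hK : IsBounded K) : BddAbove ((fun u => |e.det u|) '' univ.pi fun _ => K) :=
  ((isCompact_univ_pi fun _ => hK.isCompact_closure).image
    (continuous_abs.comp e.continuous_det)).bddAbove.mono
    (image_mono (pi_mono fun _ _ => subset_closure))

theorem Module.Basis.exists_basis_mem_abs_repr_le_two [DecidableEq ι] (e : Basis ι ℝ E)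
    {K : Set E} (hK : IsBounded K) (hspan : Submodule.span ℝ K = ⊤) :
    ∃ b : Basis ι ℝ E, (∀ i, b i ∈ K) ∧ ∀ w ∈ K, ∀ i, |b.repr w i| ≤ 2 := by
  set S := (fun u => |e.det u|) '' univ.pi fun _ => K
  have hS := e.bddAbove_abs_det_image_pi hK
  let b₀ := (Basis.ofSpan hspan.ge).reindex ((Basis.ofSpan hspan.ge).indexEquiv e)
  have hb₀ : ∀ i, b₀ i ∈ K := fun i => by
    rw [Basis.reindex_apply]; exact Basis.ofSpan_subset hspan.ge (mem_range_self _)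
  have hpos : 0 < |e.det b₀| := abs_pos.mpr (e.isUnit_det b₀).ne_zero
  have hsup : |e.det b₀| ≤ sSup S := le_csSup hS ⟨b₀, fun i _ => hb₀ i, rfl⟩
  obtain ⟨_, ⟨u, hu, rfl⟩, hlt⟩ := exists_lt_of_lt_csSup (s := S) ⟨_, b₀, fun i _ => hb₀ i, rfl⟩
    (half_lt_self (hpos.trans_le hsup))
  obtain ⟨hli, hsp⟩ := e.is_basis_iff_det.mpr (isUnit_iff_ne_zero.mpr
    (abs_pos.mp ((half_pos (hpos.trans_le hsup)).trans hlt)))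
  refine ⟨Basis.mk hli hsp.ge, fun i => by simpa using hu i trivial, fun w hw i => ?_⟩
  have hcramer : e.det u * (Basis.mk hli hsp.ge).repr w i = e.det (Function.update u i w) := by
    simpa using LinearMap.congr_fun (e.det_smul_mk_coord_eq_det_update hli hsp.ge i) w
  have hupdate : |e.det (Function.update u i w)| ≤ sSup S := by
    refine le_csSup hS ⟨_, fun j _ => ?_, rfl⟩
    rcases eq_or_ne j i with rfl | hj
    · simpa using hw
    · simpa [hj] using hu j trivial
  have : |e.det u| * |(Basis.mk hli hsp.ge).repr w i| ≤ |e.det u| * 2 := by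
    rw [← abs_mul, hcramer]; linarith
  exact le_of_mul_le_mul_left this (by linarith)

theorem exists_isBoundedCoordSystem_two {K : Set E} (hK : IsBounded K) (hne : K.Nonempty)
    (hcard : finrank ℝ (Submodule.span ℝ K) ≤ Fintype.card ι) :
    ∃ (v : ι → E) (c : ι → E →ₗ[ℝ] ℝ), IsBoundedCoordSystem K 2 v c := by
  set V := Submodule.span ℝ K
  have hK' : IsBounded (((↑) : V → E) ⁻¹' K) :=
    isometry_subtype_coe.antilipschitz.isBounded_preimage hK
  obtain ⟨b, hbK, hb⟩ :=
    (finBasis ℝ V).exists_basis_mem_abs_repr_le_two hK' Submodule.span_span_coe_preimage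
  choose c hc using fun i => LinearMap.exists_extend (b.coord i)
  have hcoord : ∀ w (hw : w ∈ K) i, c i w = b.repr ⟨w, Submodule.subset_span hw⟩ i :=
    fun w hw i => LinearMap.congr_fun (hc i) ⟨w, Submodule.subset_span hw⟩
  have hsys : IsBoundedCoordSystem K 2 (fun i => (b i : E)) c := by
    refine ⟨hbK, fun w hw i => hcoord w hw i ▸ hb _ hw i, fun w hw => ?_⟩
    simp_rw [hcoord w hw]
    have := congrArg Subtype.val (b.sum_repr ⟨w, Submodule.subset_span hw⟩)
    rw [Submodule.coe_sum] at this
    exact this.symm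
  obtain ⟨emb⟩ := Function.Embedding.nonempty_of_card_le (α := Fin (finrank ℝ V)) (β := ι)
    (by simpa using hcard)
  exact ⟨_, _, hsys.extend zero_le_two emb hne.some_mem⟩

end BoundedCoordinates

namespace CBD

variable {N d : ℕ}

theorem Cube.vol_pos (Q : Cube N) : 0 < Q.vol := pow_pos Q.side_pos N

theorem Cube.measurableSet_set (Q : Cube N) : MeasurableSet Q.set := by
  have : Q.set = univ.pi fun i => Ico (Q.corner i) (Q.corner i + Q.side) := by
    ext x; simp [Cube.set]
  rw [this]
  exact .univ_pi fun _ => measurableSet_Ico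

theorem zero_mem_cbAvg (Q : Cube N) (f : (Fin N → ℝ) → Fin d → ℝ) : 0 ∈ cbAvg Q f :=
  ⟨0, measurable_const, by simp, by ext; simp [avg]⟩

theorem norm_le_avg_norm_of_mem_cbAvg {Q : Cube N} {f : (Fin N → ℝ) → Fin d → ℝ}
    (hf : IntegrableOn f Q.set) {v : Fin d → ℝ} (hv : v ∈ cbAvg Q f) :
    ‖v‖ ≤ avg Q fun x => ‖f x‖ := by
  obtain ⟨φ, -, hφ, rfl⟩ := hv
  have hvol := inv_pos.mpr Q.vol_pos
  have havg_nonneg : 0 ≤ avg Q fun x => ‖f x‖ :=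
    mul_nonneg hvol.le (integral_nonneg fun _ => norm_nonneg _)
  refine (pi_norm_le_iff_of_nonneg havg_nonneg).mpr fun j => ?_
  unfold avg
  rw [Real.norm_eq_abs, abs_mul, abs_of_pos hvol]
  gcongr
  refine norm_integral_le_of_norm_le (f := fun x => φ x * f x j) hf.norm (ae_of_all _ fun x => ?_)
  rw [Real.norm_eq_abs, abs_mul]
  exact (mul_le_mul (hφ x) (norm_le_pi_norm (f x) j) (norm_nonneg _) zero_le_one).trans_eq
    (one_mul _)

theorem isBounded_cbAvg {Q : Cube N} {f : (Fin N → ℝ) → Fin d → ℝ} (hf : IntegrableOn f Q.set) :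
    IsBounded (cbAvg Q f) :=
  isBounded_iff_forall_norm_le.mpr ⟨_, fun _ hv => norm_le_avg_norm_of_mem_cbAvg hf hv⟩

theorem exists_eq_zero_off_of_mem_cbAvg {Q : Cube N} {f : (Fin N → ℝ) → Fin d → ℝ}
    {v : Fin d → ℝ} (hv : v ∈ cbAvg Q f) :
    ∃ φ : (Fin N → ℝ) → ℝ, Measurable φ ∧ (∀ x, |φ x| ≤ 1) ∧ (∀ x ∉ Q.set, φ x = 0) ∧
      v = fun j => avg Q fun y => φ y * f y j := by
  obtain ⟨φ, hφm, hφ, rfl⟩ := hv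
  refine ⟨Q.set.indicator φ, hφm.indicator Q.measurableSet_set, fun x => ?_,
    fun x hx => indicator_of_notMem hx φ, funext fun j => ?_⟩
  · by_cases hx : x ∈ Q.set
    · simpa [indicator_of_mem hx] using hφ x
    · simp [indicator_of_notMem hx]
  · refine congrArg (Q.vol⁻¹ * ·) (setIntegral_congr_fun Q.measurableSet_set fun y hy => ?_)
    simp [indicator_of_mem hy]

/-- Rank-`d` representation of measurable selections of `⟨⟨f⟩⟩_Q`:
there are `φ₁, …, φ_d` supported on `Q` with `‖φ_i‖_∞ ≤ 1` such that every
measurable selection `g` of `⟨⟨f⟩⟩_Q` can be written as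
`g(x) = Σ_i ψ_i(x) ⟨φ_i f⟩_Q` with `‖ψ_i‖_∞ ≤ C(d)`. -/
theorem cbAvg_rank_d_representation (d : ℕ) :
    ∃ C : ℝ, 0 < C ∧
      ∀ (N : ℕ) (Q : Cube N) (f : (Fin N → ℝ) → Fin d → ℝ),
        IntegrableOn f Q.set volume →
        ∃ φ : Fin d → (Fin N → ℝ) → ℝ,
          (∀ i, Measurable (φ i)) ∧ (∀ i x, |φ i x| ≤ 1) ∧
          (∀ i x, x ∉ Q.set → φ i x = 0) ∧
          ∀ g : (Fin N → ℝ) → Fin d → ℝ, Measurable g →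
            (∀ᵐ x ∂(volume.restrict Q.set), g x ∈ cbAvg Q f) →
            ∃ ψ : Fin d → (Fin N → ℝ) → ℝ,
              (∀ i, Measurable (ψ i)) ∧ (∀ i x, |ψ i x| ≤ C) ∧
              ∀ᵐ x ∂(volume.restrict Q.set),
                g x = ∑ i, ψ i x • (fun j => avg Q fun y => φ i y * f y j) := by
  refine ⟨2, two_pos, fun N Q f hf => ?_⟩
  obtain ⟨v, c, hsys⟩ := exists_isBoundedCoordSystem_two (ι := Fin d) (isBounded_cbAvg hf)
    ⟨0, zero_mem_cbAvg Q f⟩ ((Submodule.finrank_le _).trans (by simp))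
  choose φ hφm hφ hφQ hφv using fun i => exists_eq_zero_off_of_mem_cbAvg (hsys.mem i)
  refine ⟨φ, hφm, hφ, hφQ, fun g hg hgK => ⟨fun i x => max (-2) (min 2 (c i (g x))),
    fun i => ?_, fun i x => ?_, ?_⟩⟩
  · exact measurable_const.max (measurable_const.min
      ((c i).continuous_of_finiteDimensional.measurable.comp hg))
  · exact abs_le.mpr ⟨le_max_left _ _, max_le (by norm_num) (min_le_left _ _)⟩
  · filter_upwards [hgK] with x hx
    conv_lhs => rw [hsys.eq_sum _ hx]
    refine Finset.sum_congr rfl fun i _ => ?_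
    obtain ⟨hlo, hhi⟩ := abs_le.mp (hsys.abs_coord_le _ hx i)
    rw [min_eq_right hhi, max_eq_right hlo, hφv i]

end CBD
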